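/- Let G be a (2,1)-tight multigraph with a vertex v₀ of degree 3 having three distinct neighbours v₁,v₂,v₃ (all different from v₀). Let G₁₂=(V₁₂,E₁₂) be a subgraph of G with |E₁₂|=2|V₁₂|−2, v₁,v₂∈V₁₂ and v₀∉V₁₂, and let G₂₃=(V₂₃,E₂₃) be a (2,2)-tight subgraph of G with v₂,v₃∈V₂₃ and v₀∉V₂₃. Then |E₁₂∪E₂₃|=2|V₁₂∪V₂₃|−2 and |E₁₂∩E₂₃|=2|V₁₂∩V₂₃|−2. -/

import Mathlib

namespace Crystal

/-- The wallpaper group `pm = ℤ² ⋊ 𝒞ₛ`.  An element is a pair of a translation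
vector `t ∈ ℤ²` and a Boolean `r` recording the `𝒞ₛ`-component
(`true` = the reflection `s` in the x-axis). -/
@[ext] structure PM : Type where
  t : ℤ × ℤ
  r : Bool

namespace PM

/-- The action of the reflection component on translation vectors. -/
def act (σ : Bool) (z : ℤ × ℤ) : ℤ × ℤ := (z.1, if σ then -z.2 else z.2)

instance : Mul PM := ⟨fun a b => ⟨a.t + act a.r b.t, xor a.r b.r⟩⟩
instance : One PM := ⟨⟨0, false⟩⟩
instance : Inv PM := ⟨fun a => ⟨act a.r (-a.t), a.r⟩⟩

lemma mul_def (a b : PM) : a * b = ⟨a.t + act a.r b.t, xor a.r b.r⟩ := rfl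
lemma one_def : (1 : PM) = ⟨0, false⟩ := rfl
lemma inv_def (a : PM) : a⁻¹ = ⟨act a.r (-a.t), a.r⟩ := rfl

instance : Group PM where
  mul_assoc a b c := by
    obtain ⟨⟨x1, x2⟩, ra⟩ := a
    obtain ⟨⟨y1, y2⟩, rb⟩ := b
    obtain ⟨⟨z1, z2⟩, rc⟩ := c
    cases ra <;> cases rb <;> cases rc <;>
      simp [mul_def, act, Prod.ext_iff] <;> omega
  one_mul a := by
    obtain ⟨⟨x1, x2⟩, ra⟩ := a
    cases ra <;> simp [mul_def, one_def, act]
  mul_one a := by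
    obtain ⟨⟨x1, x2⟩, ra⟩ := a
    cases ra <;> simp [mul_def, one_def, act]
  inv_mul_cancel a := by
    obtain ⟨⟨x1, x2⟩, ra⟩ := a
    cases ra <;> simp [mul_def, one_def, inv_def, act, Prod.ext_iff]

/-- The affine action of `pm` on the plane: `(z,σ)·x = σ(x) + z`. -/
noncomputable def toPlane (g : PM) (x : ℝ × ℝ) : ℝ × ℝ :=
  (x.1 + (g.t.1 : ℝ), (if g.r then -x.2 else x.2) + (g.t.2 : ℝ))

end PM

/-- A multigraph: a finite vertex set, a finite edge set, and two endpoint maps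
(which also fix a reference orientation of every edge, from `fst` to `snd`).
Loops and parallel edges are allowed. -/
structure Multigraph (α β : Type) where
  verts : Finset α
  edges : Finset β
  fst : β → α
  snd : β → α
  fst_mem : ∀ e ∈ edges, fst e ∈ verts
  snd_mem : ∀ e ∈ edges, snd e ∈ verts

variable {α β : Type}

/-- `H` is a subgraph of `G`. -/
def IsSubgraph (H G : Multigraph α β) : Prop :=
  H.verts ⊆ G.verts ∧ H.edges ⊆ G.edges ∧
    ∀ e ∈ H.edges, H.fst e = G.fst e ∧ H.snd e = G.snd e

/-- `(k,l)`-sparsity. -/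
def Sparse (k l : ℕ) (G : Multigraph α β) : Prop :=
  ∀ H : Multigraph α β, IsSubgraph H G → 1 ≤ H.edges.card →
    (H.edges.card : ℤ) ≤ k * H.verts.card - l

/-- `(k,l)`-tightness. -/
def Tight (k l : ℕ) (G : Multigraph α β) : Prop :=
  Sparse k l G ∧ (G.edges.card : ℤ) = k * G.verts.card - l

/-- The degree of a vertex: the number of edge-incidences, loops counting twice. -/
def Multigraph.degree [DecidableEq α] (G : Multigraph α β) (v : α) : ℕ :=
  ∑ e ∈ G.edges, ((if G.fst e = v then 1 else 0) + (if G.snd e = v then 1 else 0))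

/-- The starting vertex of a step `(e, dir)` of a walk: `dir = true` means the
edge is traversed forwards. -/
def stepHead (G : Multigraph α β) (s : β × Bool) : α := if s.2 then G.fst s.1 else G.snd s.1

/-- The final vertex of a step of a walk. -/
def stepTail (G : Multigraph α β) (s : β × Bool) : α := if s.2 then G.snd s.1 else G.fst s.1

/-- `IsWalk G u v L` : `L` is a walk in `G` from `u` to `v`. -/
def IsWalk (G : Multigraph α β) : α → α → List (β × Bool) → Prop
  | u, v, [] => u = v
  | u, v, s :: L => s.1 ∈ G.edges ∧ stepHead G s = u ∧ IsWalk G (stepTail G s) v L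

/-- The net gain of a walk. -/
def walkGain (m : β → PM) (L : List (β × Bool)) : PM :=
  (L.map fun s => if s.2 then m s.1 else (m s.1)⁻¹).prod

/-- A gain graph is balanced if every closed walk has identity net gain. -/
def Balanced (G : Multigraph α β) (m : β → PM) : Prop :=
  ∀ u L, IsWalk G u u L → walkGain m L = 1

/-- A gain graph is purely periodic if every closed walk has net gain in the
translation subgroup `ℤ²`. -/
def PurelyPeriodic (G : Multigraph α β) (m : β → PM) : Prop :=
  ∀ u L, IsWalk G u u L → (walkGain m L).r = false

/-- A multigraph is connected if every pair of its vertices is joined by a walk. -/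
def Connected (G : Multigraph α β) : Prop :=
  ∀ u ∈ G.verts, ∀ v ∈ G.verts, ∃ L, IsWalk G u v L

/-- The conditions for `m` to be a gain assignment on `G`: parallel edges with the
same orientation get distinct gains, and loops get non-identity gains. -/
structure IsGainGraph (G : Multigraph α β) (m : β → PM) : Prop where
  parallel_ne : ∀ e ∈ G.edges, ∀ f ∈ G.edges,
    e ≠ f → G.fst e = G.fst f → G.snd e = G.snd f → m e ≠ m f
  loop_ne_one : ∀ e ∈ G.edges, G.fst e = G.snd e → m e ≠ 1

/-- `ℤ²⋊𝒞ₛ`-tightness of a gain graph. -/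
def PMTight (G : Multigraph α β) (m : β → PM) : Prop :=
  Tight 2 1 G ∧
    (∀ H : Multigraph α β, IsSubgraph H G → PurelyPeriodic H m → Sparse 2 2 H) ∧
    (∀ H : Multigraph α β, IsSubgraph H G → Balanced H m → Sparse 2 3 H)

/-- The orbit rigidity matrix of a `ℤ²⋊𝒞ₛ`-gain framework. -/
noncomputable def orbitMatrix [DecidableEq α] (G : Multigraph α β) (m : β → PM)
    (p : α → ℝ × ℝ) :
    Matrix {e : β // e ∈ G.edges} ({v : α // v ∈ G.verts} × Fin 2) ℝ :=
  fun er vc =>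
    let e : β := er.1
    let i : α := G.fst e
    let j : α := G.snd e
    let w : α := vc.1.1
    let entry : ℝ × ℝ :=
      if i = j then
        (if w = i then p i + p i - PM.toPlane (m e) (p i) - PM.toPlane (m e)⁻¹ (p i) else 0)
      else if w = i then p i - PM.toPlane (m e) (p j)
      else if w = j then p j - PM.toPlane (m e)⁻¹ (p i)
      else 0
    if vc.2 = 0 then entry.1 else entry.2

/-- A configuration is generic if its orbit rigidity matrix has the maximum
possible rank among all configurations. -/
def Generic [DecidableEq α] (G : Multigraph α β) (m : β → PM) (p : α → ℝ × ℝ) : Prop :=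
  ∀ q : α → ℝ × ℝ, (orbitMatrix G m q).rank ≤ (orbitMatrix G m p).rank

/-- A gain graph is rigid if the orbit rigidity matrix of a generic configuration
has rank `2|V| - 1`. -/
def Rigid [DecidableEq α] (G : Multigraph α β) (m : β → PM) : Prop :=
  ∃ p : α → ℝ × ℝ, Generic G m p ∧
    ((orbitMatrix G m p).rank : ℤ) = 2 * G.verts.card - 1

/-- A gain graph is independent if the rows of the orbit rigidity matrix of a
generic configuration are linearly independent. -/
def Independent [DecidableEq α] (G : Multigraph α β) (m : β → PM) : Prop :=
  ∃ p : α → ℝ × ℝ, Generic G m p ∧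
    LinearIndependent ℝ (fun er => orbitMatrix G m p er)

/-- A gain graph is minimally rigid if it is rigid and independent. -/
def MinimallyRigid [DecidableEq α] (G : Multigraph α β) (m : β → PM) : Prop :=
  Rigid G m ∧ Independent G m

/-- `e` joins `u` and `v` (in one of the two orientations). -/
def Joins (G : Multigraph α β) (e : β) (u v : α) : Prop :=
  (G.fst e = u ∧ G.snd e = v) ∨ (G.fst e = v ∧ G.snd e = u)

/-- The gain of an edge read with `v` as its initial vertex (inverting the gain
if the edge is oriented towards `v`). -/
def gainFrom [DecidableEq α] (G : Multigraph α β) (m : β → PM) (v : α) (e : β) : PM :=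
  if G.fst e = v then m e else (m e)⁻¹

/-- The endpoint of an edge other than `v` (for an edge incident with `v`). -/
def otherEnd [DecidableEq α] (G : Multigraph α β) (v : α) (e : β) : α :=
  if G.fst e = v then G.snd e else G.fst e

/-- Deletion of a vertex together with all edges incident with it. -/
def Multigraph.deleteVertex [DecidableEq α] (G : Multigraph α β) (v : α) :
    Multigraph α β where
  verts := G.verts.erase v
  edges := G.edges.filter fun e => G.fst e ≠ v ∧ G.snd e ≠ v
  fst := G.fst
  snd := G.snd
  fst_mem := fun e he => by
    rw [Finset.mem_filter] at he
    exact Finset.mem_erase.2 ⟨he.2.1, G.fst_mem e he.1⟩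
  snd_mem := fun e he => by
    rw [Finset.mem_filter] at he
    exact Finset.mem_erase.2 ⟨he.2.2, G.snd_mem e he.1⟩

/-- Addition of a new edge `f` from `u` to `v`. -/
def Multigraph.addEdge [DecidableEq α] [DecidableEq β] (G : Multigraph α β)
    (f : β) (u v : α) : Multigraph α β where
  verts := insert u (insert v G.verts)
  edges := insert f G.edges
  fst := Function.update G.fst f u
  snd := Function.update G.snd f v
  fst_mem := fun e he => by
    by_cases hef : e = f
    · subst hef; simp
    · rw [Function.update_of_ne hef]
      have heG : e ∈ G.edges := by
        rcases Finset.mem_insert.1 he with h | h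
        · exact absurd h hef
        · exact h
      exact Finset.mem_insert_of_mem (Finset.mem_insert_of_mem (G.fst_mem e heG))
  snd_mem := fun e he => by
    by_cases hef : e = f
    · subst hef; simp
    · rw [Function.update_of_ne hef]
      have heG : e ∈ G.edges := by
        rcases Finset.mem_insert.1 he with h | h
        · exact absurd h hef
        · exact h
      exact Finset.mem_insert_of_mem (Finset.mem_insert_of_mem (G.snd_mem e heG))

/-- `(G',m')` is obtained from `(G,m)` by a gained 0-extension. -/
def IsZeroExtension [DecidableEq α] [DecidableEq β] (G : Multigraph α β) (m : β → PM)
    (G' : Multigraph α β) (m' : β → PM) : Prop :=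
  ∃ v₀ v₁ v₂ f₁ f₂, v₀ ∉ G.verts ∧ v₁ ∈ G.verts ∧ v₂ ∈ G.verts ∧
    f₁ ∉ G.edges ∧ f₂ ∉ G.edges ∧ f₁ ≠ f₂ ∧
    G'.verts = insert v₀ G.verts ∧ G'.edges = insert f₁ (insert f₂ G.edges) ∧
    (∀ e ∈ G.edges, G'.fst e = G.fst e ∧ G'.snd e = G.snd e ∧ m' e = m e) ∧
    Joins G' f₁ v₀ v₁ ∧ Joins G' f₂ v₀ v₂ ∧
    IsGainGraph G' m'

/-- `(G',m')` is obtained from `(G,m)` by a gained 1-extension. -/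
def IsOneExtension [DecidableEq α] [DecidableEq β] (G : Multigraph α β) (m : β → PM)
    (G' : Multigraph α β) (m' : β → PM) : Prop :=
  ∃ v₀ v₃ e f₁ f₂ f₃, v₀ ∉ G.verts ∧ v₃ ∈ G.verts ∧ e ∈ G.edges ∧
    f₁ ∉ G.edges.erase e ∧ f₂ ∉ G.edges.erase e ∧ f₃ ∉ G.edges.erase e ∧
    f₁ ≠ f₂ ∧ f₁ ≠ f₃ ∧ f₂ ≠ f₃ ∧
    G'.verts = insert v₀ G.verts ∧
    G'.edges = insert f₁ (insert f₂ (insert f₃ (G.edges.erase e))) ∧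
    (∀ e' ∈ G.edges.erase e, G'.fst e' = G.fst e' ∧ G'.snd e' = G.snd e' ∧ m' e' = m e') ∧
    Joins G' f₁ v₀ (G.fst e) ∧ Joins G' f₂ v₀ (G.snd e) ∧ Joins G' f₃ v₀ v₃ ∧
    (gainFrom G' m' v₀ f₁)⁻¹ * gainFrom G' m' v₀ f₂ = m e ∧
    IsGainGraph G' m'

/-- `(G',m')` is obtained from `(G,m)` by a gained loop-1-extension. -/
def IsLoopOneExtension [DecidableEq α] [DecidableEq β] (G : Multigraph α β) (m : β → PM)
    (G' : Multigraph α β) (m' : β → PM) : Prop :=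
  ∃ v₀ v₁ l f, v₀ ∉ G.verts ∧ v₁ ∈ G.verts ∧ l ∉ G.edges ∧ f ∉ G.edges ∧ l ≠ f ∧
    G'.verts = insert v₀ G.verts ∧ G'.edges = insert l (insert f G.edges) ∧
    (∀ e ∈ G.edges, G'.fst e = G.fst e ∧ G'.snd e = G.snd e ∧ m' e = m e) ∧
    G'.fst l = v₀ ∧ G'.snd l = v₀ ∧ (m' l).r = true ∧
    Joins G' f v₀ v₁ ∧ IsGainGraph G' m'

/-- A `ℤ²⋊𝒞ₛ`-tight gain graph on `K₁¹`: a single vertex with a single loop whose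
gain has non-trivial `𝒞ₛ`-component. -/
def IsTightK11 (G : Multigraph α β) (m : β → PM) : Prop :=
  ∃ v l, G.verts = {v} ∧ G.edges = {l} ∧ G.fst l = v ∧ G.snd l = v ∧ (m l).r = true

/-! The subgraph `G₁₂ ∪ G₂₃` together with `v₀` and its three edges has `|E₁₂ ∪ E₂₃| + 3` edges on
`|V₁₂ ∪ V₂₃| + 1` vertices, so `(2,1)`-sparsity of `G` gives `|E₁₂ ∪ E₂₃| ≤ 2|V₁₂ ∪ V₂₃| - 2`; the
intersection contains `v₂` and lies in `G₂₃`, so `(2,2)`-sparsity gives `|E₁₂ ∩ E₂₃| ≤ 2|V₁₂ ∩ V₂₃| - 2`.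
By inclusion–exclusion the two bounds add up to `|E₁₂| + |E₂₃| = 2|V₁₂| + 2|V₂₃| - 4`, so both are
equalities. -/

section Counting

variable {G H₁ H₂ : Multigraph α β} {k l : ℕ}

theorem IsSubgraph.ends_mem (h : IsSubgraph H₁ G) {e : β} (he : e ∈ H₁.edges) :
    G.fst e ∈ H₁.verts ∧ G.snd e ∈ H₁.verts := by
  obtain ⟨hfst, hsnd⟩ := h.2.2 e he
  exact ⟨hfst ▸ H₁.fst_mem e he, hsnd ▸ H₁.snd_mem e he⟩

theorem IsSubgraph.ends_mem_union [DecidableEq α] [DecidableEq β] (h₁ : IsSubgraph H₁ G)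
    (h₂ : IsSubgraph H₂ G) :
    ∀ e ∈ H₁.edges ∪ H₂.edges,
      G.fst e ∈ H₁.verts ∪ H₂.verts ∧ G.snd e ∈ H₁.verts ∪ H₂.verts := by
  intro e he
  rcases Finset.mem_union.1 he with he | he
  · exact (h₁.ends_mem he).imp (Finset.mem_union_left _) (Finset.mem_union_left _)
  · exact (h₂.ends_mem he).imp (Finset.mem_union_right _) (Finset.mem_union_right _)

theorem IsSubgraph.ends_mem_inter [DecidableEq α] [DecidableEq β] (h₁ : IsSubgraph H₁ G)
    (h₂ : IsSubgraph H₂ G) :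
    ∀ e ∈ H₁.edges ∩ H₂.edges,
      H₂.fst e ∈ H₁.verts ∩ H₂.verts ∧ H₂.snd e ∈ H₁.verts ∩ H₂.verts := by
  intro e he
  obtain ⟨he₁, he₂⟩ := Finset.mem_inter.1 he
  obtain ⟨hfst, hsnd⟩ := h₂.2.2 e he₂
  obtain ⟨hfst₁, hsnd₁⟩ := h₁.ends_mem he₁
  exact ⟨Finset.mem_inter.2 ⟨hfst ▸ hfst₁, H₂.fst_mem e he₂⟩,
    Finset.mem_inter.2 ⟨hsnd ▸ hsnd₁, H₂.snd_mem e he₂⟩⟩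

theorem joins_otherEnd [DecidableEq α] {v : α} {e : β} (h : G.fst e = v ∨ G.snd e = v) :
    Joins G e v (otherEnd G v e) := by
  unfold Joins otherEnd
  split_ifs with hfst
  · exact .inl ⟨hfst, rfl⟩
  · exact .inr ⟨rfl, h.resolve_left hfst⟩

theorem Sparse.card_le_of_forall_mem (hG : Sparse k l G) {V : Finset α} {E : Finset β}
    (hV : V ⊆ G.verts) (hE : E ⊆ G.edges)
    (hends : ∀ e ∈ E, G.fst e ∈ V ∧ G.snd e ∈ V) (hne : E.Nonempty) :
    (E.card : ℤ) ≤ k * V.card - l :=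
  hG ⟨V, E, G.fst, G.snd, fun e he => (hends e he).1, fun e he => (hends e he).2⟩
    ⟨hV, hE, fun _ _ => ⟨rfl, rfl⟩⟩ hne.card_pos

theorem Sparse.card_le_of_forall_mem_of_verts_nonempty (hG : Sparse k l G) (hlk : l ≤ k)
    {V : Finset α} {E : Finset β} (hV : V ⊆ G.verts) (hE : E ⊆ G.edges)
    (hends : ∀ e ∈ E, G.fst e ∈ V ∧ G.snd e ∈ V) (hVne : V.Nonempty) :
    (E.card : ℤ) ≤ k * V.card - l := by
  rcases E.eq_empty_or_nonempty with rfl | hne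
  · have : (l : ℤ) ≤ k * V.card := by
      have := hVne.card_pos
      nlinarith
    simpa using this
  · exact hG.card_le_of_forall_mem hV hE hends hne

theorem Sparse.card_add_card_le_of_joins [DecidableEq α] [DecidableEq β] (hG : Sparse k l G)
    {V : Finset α} {E F : Finset β} {v₀ : α} (hV : V ⊆ G.verts) (hE : E ⊆ G.edges)
    (hends : ∀ e ∈ E, G.fst e ∈ V ∧ G.snd e ∈ V) (hv₀ : v₀ ∈ G.verts) (hv₀V : v₀ ∉ V)
    (hF : F ⊆ G.edges) (hFjoins : ∀ f ∈ F, ∃ w ∈ V, Joins G f v₀ w) (hFne : F.Nonempty) :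
    ((E.card + F.card : ℕ) : ℤ) ≤ k * (V.card + 1) - l := by
  have hFends : ∀ f ∈ F, G.fst f ∈ insert v₀ V ∧ G.snd f ∈ insert v₀ V := by
    intro f hf
    obtain ⟨w, hw, ⟨hfst, hsnd⟩ | ⟨hfst, hsnd⟩⟩ := hFjoins f hf <;> rw [hfst, hsnd] <;>
      simp [hw]
  have hdisj : Disjoint E F := by
    refine Finset.disjoint_left.2 fun e heE heF => ?_
    obtain ⟨w, -, ⟨hfst, -⟩ | ⟨-, hsnd⟩⟩ := hFjoins e heF
    · exact hv₀V (hfst ▸ (hends e heE).1)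
    · exact hv₀V (hsnd ▸ (hends e heE).2)
  have hunion := hG.card_le_of_forall_mem (V := insert v₀ V) (E := E ∪ F)
    (Finset.insert_subset hv₀ hV) (Finset.union_subset hE hF)
    (fun e he => (Finset.mem_union.1 he).elim
      (fun heE => (hends e heE).imp (Finset.mem_insert_of_mem ·) (Finset.mem_insert_of_mem ·))
      (hFends e))
    (hFne.mono Finset.subset_union_right)
  rwa [Finset.card_union_of_disjoint hdisj, Finset.card_insert_of_notMem hv₀V,
    Nat.cast_add_one] at hunion

end Counting

theorem count22_tight22_counts_general {α β : Type} [DecidableEq α] [DecidableEq β]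
    (G : Multigraph α β) (hG : Tight 2 1 G)
    (v₀ v₁ v₂ v₃ : α)
    (hv₀ : v₀ ∈ G.verts)
    (e₁ e₂ e₃ : β) (he12 : e₁ ≠ e₂) (he13 : e₁ ≠ e₃) (he23 : e₂ ≠ e₃)
    (hm₁ : e₁ ∈ G.edges) (hm₂ : e₂ ∈ G.edges) (hm₃ : e₃ ∈ G.edges)
    (hi₁ : G.fst e₁ = v₀ ∨ G.snd e₁ = v₀) (ho₁ : otherEnd G v₀ e₁ = v₁)
    (hi₂ : G.fst e₂ = v₀ ∨ G.snd e₂ = v₀) (ho₂ : otherEnd G v₀ e₂ = v₂)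
    (hi₃ : G.fst e₃ = v₀ ∨ G.snd e₃ = v₀) (ho₃ : otherEnd G v₀ e₃ = v₃)
    (G₁₂ G₂₃ : Multigraph α β)
    (hsub₁₂ : IsSubgraph G₁₂ G)
    (hc₁₂ : (G₁₂.edges.card : ℤ) = 2 * G₁₂.verts.card - 2)
    (hv₁₁₂ : v₁ ∈ G₁₂.verts) (hv₂₁₂ : v₂ ∈ G₁₂.verts) (hv₀₁₂ : v₀ ∉ G₁₂.verts)
    (hsub₂₃ : IsSubgraph G₂₃ G) (ht₂₃ : Tight 2 2 G₂₃)
    (hv₂₂₃ : v₂ ∈ G₂₃.verts) (hv₃₂₃ : v₃ ∈ G₂₃.verts) (hv₀₂₃ : v₀ ∉ G₂₃.verts) :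
    ((G₁₂.edges ∪ G₂₃.edges).card : ℤ) = 2 * (G₁₂.verts ∪ G₂₃.verts).card - 2 ∧
    ((G₁₂.edges ∩ G₂₃.edges).card : ℤ) = 2 * (G₁₂.verts ∩ G₂₃.verts).card - 2 := by
  have hjoins : ∀ f ∈ ({e₁, e₂, e₃} : Finset β),
      ∃ w ∈ G₁₂.verts ∪ G₂₃.verts, Joins G f v₀ w := by
    simp only [Finset.mem_insert, Finset.mem_singleton]
    rintro f (rfl | rfl | rfl)
    · exact ⟨v₁, Finset.mem_union_left _ hv₁₁₂, ho₁ ▸ joins_otherEnd hi₁⟩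
    · exact ⟨v₂, Finset.mem_union_left _ hv₂₁₂, ho₂ ▸ joins_otherEnd hi₂⟩
    · exact ⟨v₃, Finset.mem_union_right _ hv₃₂₃, ho₃ ▸ joins_otherEnd hi₃⟩
  have hunion := hG.1.card_add_card_le_of_joins (Finset.union_subset hsub₁₂.1 hsub₂₃.1)
    (Finset.union_subset hsub₁₂.2.1 hsub₂₃.2.1) (hsub₁₂.ends_mem_union hsub₂₃) hv₀
    (by simp [hv₀₁₂, hv₀₂₃]) (by simp [Finset.insert_subset_iff, hm₁, hm₂, hm₃]) hjoins
    (Finset.insert_nonempty _ _)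
  rw [Finset.card_eq_three.2 ⟨e₁, e₂, e₃, he12, he13, he23, rfl⟩] at hunion
  have hinter := ht₂₃.1.card_le_of_forall_mem_of_verts_nonempty le_rfl Finset.inter_subset_right
    Finset.inter_subset_right (hsub₁₂.ends_mem_inter hsub₂₃) ⟨v₂, Finset.mem_inter.2 ⟨hv₂₁₂, hv₂₂₃⟩⟩
  have hverts := Finset.card_union_add_card_inter G₁₂.verts G₂₃.verts
  have hedges := Finset.card_union_add_card_inter G₁₂.edges G₂₃.edges
  have hc₂₃ := ht₂₃.2
  push_cast at hunion hinter hc₂₃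
  constructor <;> omega

/-- Union/intersection counts for a `(2,2)`-count subgraph and a
`(2,2)`-tight subgraph at a degree-3 vertex with three distinct neighbours. -/
theorem count22_tight22_counts {α β : Type} [DecidableEq α] [DecidableEq β]
    (G : Multigraph α β) (hG : Tight 2 1 G)
    (v₀ v₁ v₂ v₃ : α) (h01 : v₁ ≠ v₀) (h02 : v₂ ≠ v₀) (h03 : v₃ ≠ v₀)
    (h12 : v₁ ≠ v₂) (h13 : v₁ ≠ v₃) (h23 : v₂ ≠ v₃)
    (hv₀ : v₀ ∈ G.verts) (hdeg : G.degree v₀ = 3)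
    (e₁ e₂ e₃ : β) (he12 : e₁ ≠ e₂) (he13 : e₁ ≠ e₃) (he23 : e₂ ≠ e₃)
    (hm₁ : e₁ ∈ G.edges) (hm₂ : e₂ ∈ G.edges) (hm₃ : e₃ ∈ G.edges)
    (hi₁ : G.fst e₁ = v₀ ∨ G.snd e₁ = v₀) (ho₁ : otherEnd G v₀ e₁ = v₁)
    (hi₂ : G.fst e₂ = v₀ ∨ G.snd e₂ = v₀) (ho₂ : otherEnd G v₀ e₂ = v₂)
    (hi₃ : G.fst e₃ = v₀ ∨ G.snd e₃ = v₀) (ho₃ : otherEnd G v₀ e₃ = v₃)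
    (G₁₂ G₂₃ : Multigraph α β)
    (hsub₁₂ : IsSubgraph G₁₂ G)
    (hc₁₂ : (G₁₂.edges.card : ℤ) = 2 * G₁₂.verts.card - 2)
    (hv₁₁₂ : v₁ ∈ G₁₂.verts) (hv₂₁₂ : v₂ ∈ G₁₂.verts) (hv₀₁₂ : v₀ ∉ G₁₂.verts)
    (hsub₂₃ : IsSubgraph G₂₃ G) (ht₂₃ : Tight 2 2 G₂₃)
    (hv₂₂₃ : v₂ ∈ G₂₃.verts) (hv₃₂₃ : v₃ ∈ G₂₃.verts) (hv₀₂₃ : v₀ ∉ G₂₃.verts) :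
    ((G₁₂.edges ∪ G₂₃.edges).card : ℤ) = 2 * (G₁₂.verts ∪ G₂₃.verts).card - 2 ∧
    ((G₁₂.edges ∩ G₂₃.edges).card : ℤ) = 2 * (G₁₂.verts ∩ G₂₃.verts).card - 2 :=
  count22_tight22_counts_general G hG v₀ v₁ v₂ v₃ hv₀ e₁ e₂ e₃ he12 he13 he23 hm₁ hm₂ hm₃ hi₁ ho₁
    hi₂ ho₂ hi₃ ho₃ G₁₂ G₂₃ hsub₁₂ hc₁₂ hv₁₁₂ hv₂₁₂ hv₀₁₂ hsub₂₃ ht₂₃ hv₂₂₃ hv₃₂₃ hv₀₂₃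

end Crystal
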